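/- Let A be an n × n matrix with nonnegative real entries and let Π(A) be the matrix whose (i,j) entry equals A_{ij} if there exists a permutation σ of {1,…,n} with σ(i) = j and ∏_{k} A_{k,σ(k)} > 0 (i.e., the entry lies on a positive diagonal), and equals 0 otherwise. Then: (i) Π(A) = 0 if and only if per(A) = 0; (ii) pm(Π(A)) = pm(A); (iii) sm(Π(A)) = sm(A). -/

import Mathlib

open scoped BigOperators Kronecker
open Matrix

/-- The permanent of a square real matrix. -/
noncomputable def perm {ι : Type*} [Fintype ι] [DecidableEq ι] (A : Matrix ι ι ℝ) : ℝ :=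
  ∑ σ : Equiv.Perm ι, ∏ i, A i (σ i)

/-- The permanental mean `pm A = (per A / n!) ^ (1/n)`. -/
noncomputable def pm {ι : Type*} [Fintype ι] [DecidableEq ι] (A : Matrix ι ι ℝ) : ℝ :=
  (perm A / (Nat.factorial (Fintype.card ι) : ℝ)) ^ ((Fintype.card ι : ℝ)⁻¹)

/-- The geometric mean of the entries of a vector. -/
noncomputable def gmVec {ι : Type*} [Fintype ι] (v : ι → ℝ) : ℝ :=
  (∏ i, v i) ^ ((Fintype.card ι : ℝ)⁻¹)

/-- The set of values whose infimum defines the scaling mean. -/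
noncomputable def smSet {ι κ : Type*} [Fintype ι] [Fintype κ] (A : Matrix ι κ ℝ) : Set ℝ :=
  {r : ℝ | ∃ x : ι → ℝ, ∃ y : κ → ℝ, (∀ i, 0 < x i) ∧ (∀ j, 0 < y j) ∧
    r = (∑ i, ∑ j, x i * A i j * y j) / (gmVec x * gmVec y)}

/-- The scaling mean `sm A = (1/(mn)) · inf over positive vectors x, y of xᵀAy/(gm x · gm y)`. -/
noncomputable def sm {ι κ : Type*} [Fintype ι] [Fintype κ] (A : Matrix ι κ ℝ) : ℝ :=
  ((Fintype.card ι : ℝ) * (Fintype.card κ : ℝ))⁻¹ * sInf (smSet A)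

/-- `PiMap A` keeps the entries of `A` lying on a positive diagonal and
sets all other entries to zero. -/
noncomputable def PiMap {ι : Type*} [Fintype ι] [DecidableEq ι]
    (A : Matrix ι ι ℝ) : Matrix ι ι ℝ :=
  Matrix.of fun i j =>
    haveI := Classical.propDecidable (∃ σ : Equiv.Perm ι, σ i = j ∧ 0 < ∏ k, A k (σ k))
    if ∃ σ : Equiv.Perm ι, σ i = j ∧ 0 < ∏ k, A k (σ k) then A i j else 0

/-!
Every positive diagonal of `A` is a positive diagonal of `Π(A)` and no other diagonal of `Π(A)`
is positive, so `per Π(A) = per A`; this gives (i) and (ii).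

For (iii), `Π(A) ≤ A` gives `sm Π(A) ≤ sm A`. Conversely, let `σ₀` be a positive diagonal and
draw an arc `u → v` whenever `A u (σ₀ v) > 0`. A positive entry `A i j` lies on a positive
diagonal exactly when the arc `i → σ₀⁻¹ j` lies on a cycle (close the cycle by loops and Hall's
theorem). Let `c u` be the number of vertices from which `u` is reachable: it is constant along
cycles and increases strictly along the other arcs. Scaling row `i` by `t ^ c i` and column `j`
by `t ^ (-c (σ₀⁻¹ j))` keeps the geometric means and the entries on positive diagonals, and
divides every other entry by at least `t`; letting `t → ∞` gives `sm A ≤ sm Π(A)`. When `A` has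
no positive diagonal, Hall's theorem gives a set `s` of rows whose positive entries lie in fewer
than `#s` columns, and scaling these rows up and those columns down shows `sm A = 0`.
-/

open Finset Filter Topology Relation

section Reachability

variable {α : Type*} {r : α → α → Prop}

lemma Relation.ReflTransGen.exists_exit {s : Set α} {a b : α} (hab : ReflTransGen r a b)
    (ha : a ∈ s) (hb : b ∉ s) : ∃ p ∈ s, ∃ q ∉ s, r p q := by
  induction hab with
  | refl => exact absurd ha hb
  | @tail c d _ hcd ih =>
    by_cases hc : c ∈ s
    · exact ⟨c, hc, d, hb, hcd⟩
    · exact ih hc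

lemma Equiv.Perm.reflTransGen_pow_apply {τ : Equiv.Perm α} (h : ∀ k, r k (τ k)) (m : ℕ)
    (x : α) : ReflTransGen r x ((τ ^ m) x) := by
  induction m with
  | zero => exact ReflTransGen.refl
  | succ m ih =>
    rw [pow_succ', Equiv.Perm.mul_apply]
    exact ih.tail (h _)

lemma Equiv.Perm.reflTransGen_apply_left [Finite α] {τ : Equiv.Perm α} (h : ∀ k, r k (τ k))
    (x : α) : ReflTransGen r (τ x) x := by
  obtain ⟨m, hm⟩ :=
    (Equiv.Perm.sameCycle_apply_left.mpr (Equiv.Perm.SameCycle.refl τ x)).exists_nat_pow_eq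
  simpa [hm] using reflTransGen_pow_apply h m (τ x)

noncomputable def ancestorCount (r : α → α → Prop) (u : α) : ℕ :=
  {w | ReflTransGen r w u}.ncard

variable [Finite α]

lemma ancestorCount_mono {u v : α} (h : ReflTransGen r u v) :
    ancestorCount r u ≤ ancestorCount r v :=
  Set.ncard_le_ncard (fun _ hw => ReflTransGen.trans hw h) (Set.toFinite _)

lemma ancestorCount_lt {u v : α} (h : r u v) (hvu : ¬ReflTransGen r v u) :
    ancestorCount r u < ancestorCount r v :=
  Set.ncard_lt_ncard
    ⟨fun _ hw => hw.tail h, fun hsub => hvu (hsub (ReflTransGen.refl : ReflTransGen r v v))⟩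
    (Set.toFinite _)

lemma ancestorCount_perm_apply {τ : Equiv.Perm α} (h : ∀ k, r k (τ k)) (u : α) :
    ancestorCount r (τ u) = ancestorCount r u :=
  le_antisymm (ancestorCount_mono (τ.reflTransGen_apply_left h u))
    (ancestorCount_mono (ReflTransGen.single (h u)))

end Reachability

section Hall

variable {α : Type*} [Fintype α] {r : α → α → Prop}

lemma Equiv.Perm.exists_forall_rel_of_hall [DecidableRel r]
    (h : ∀ s : Finset α, #s ≤ #{b | ∃ a ∈ s, r a b}) :
    ∃ τ : Equiv.Perm α, ∀ a, r a (τ a) := by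
  obtain ⟨f, hf, hr⟩ := (Fintype.all_card_le_filter_rel_iff_exists_injective r).1 h
  exact ⟨Equiv.ofBijective f hf.bijective_of_finite, hr⟩

lemma Equiv.Perm.exists_apply_eq_of_reflTransGen (hrefl : ∀ k, r k k) {u v : α} (huv : r u v)
    (hvu : ReflTransGen r v u) : ∃ τ : Equiv.Perm α, τ u = v ∧ ∀ k, r k (τ k) := by
  classical
  let r' (k w : α) : Prop := r k w ∧ (k = u → w = v)
  suffices ∃ τ : Equiv.Perm α, ∀ k, r' k (τ k) by
    obtain ⟨τ, hτ⟩ := this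
    exact ⟨τ, (hτ u).2 rfl, fun k => (hτ k).1⟩
  -- Hall's condition: loops cover `s.erase u`, and one vertex outside it is reached either by
  -- the arc `u → v` or by the path from `v` back to `u` leaving `s.erase u`.
  refine exists_forall_rel_of_hall fun s => ?_
  have hloop : ∀ k ∈ s.erase u, ∃ a ∈ s, r' a k := fun k hk =>
    ⟨k, mem_of_mem_erase hk, hrefl k, fun h => absurd h (ne_of_mem_erase hk)⟩
  by_cases hu : u ∈ s
  · obtain ⟨w, hw, hws⟩ : ∃ w ∉ s.erase u, ∃ a ∈ s, r' a w := by
      by_cases hv : v ∈ s.erase u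
      · obtain ⟨p, hp, q, hq, hpq⟩ :=
          hvu.exists_exit (s := ↑(s.erase u)) hv (by simp)
        exact ⟨q, hq, p, mem_of_mem_erase hp, hpq, fun h => absurd h (ne_of_mem_erase hp)⟩
      · exact ⟨v, hv, u, hu, huv, fun _ => rfl⟩
    calc #s = #(insert w (s.erase u)) := by rw [card_insert_of_notMem hw, card_erase_add_one hu]
      _ ≤ _ := card_le_card <| insert_subset (by simpa using hws) fun k hk => by
          simpa using hloop k hk
  · exact card_le_card fun k hk => by
      simpa using hloop k (mem_erase.2 ⟨fun h => hu (h ▸ hk), hk⟩)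

end Hall

section PositiveDiagonals

variable {ι : Type*} [Fintype ι] {A : Matrix ι ι ℝ}

def OnPosDiag (A : Matrix ι ι ℝ) (i j : ι) : Prop :=
  ∃ σ : Equiv.Perm ι, σ i = j ∧ 0 < ∏ k, A k (σ k)

lemma prod_diag_pos_iff (hA : ∀ i j, 0 ≤ A i j) (σ : Equiv.Perm ι) :
    0 < ∏ k, A k (σ k) ↔ ∀ k, 0 < A k (σ k) :=
  ⟨fun h k => (hA _ _).lt_of_ne fun h0 => h.ne' (prod_eq_zero (mem_univ k) h0.symm),
    fun h => prod_pos fun k _ => h k⟩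

variable [DecidableEq ι]

lemma piMap_apply_of_onPosDiag {i j : ι} (h : OnPosDiag A i j) : PiMap A i j = A i j :=
  if_pos h

lemma piMap_apply_of_not_onPosDiag {i j : ι} (h : ¬OnPosDiag A i j) : PiMap A i j = 0 :=
  if_neg h

lemma piMap_nonneg (hA : ∀ i j, 0 ≤ A i j) (i j : ι) : 0 ≤ PiMap A i j := by
  by_cases h : OnPosDiag A i j
  · exact (piMap_apply_of_onPosDiag h).symm ▸ hA i j
  · exact (piMap_apply_of_not_onPosDiag h).ge

lemma piMap_le (hA : ∀ i j, 0 ≤ A i j) (i j : ι) : PiMap A i j ≤ A i j := by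
  by_cases h : OnPosDiag A i j
  · exact (piMap_apply_of_onPosDiag h).le
  · exact (piMap_apply_of_not_onPosDiag h).trans_le (hA i j)

lemma perm_eq_zero_iff (hA : ∀ i j, 0 ≤ A i j) :
    perm A = 0 ↔ ∀ σ : Equiv.Perm ι, ∏ k, A k (σ k) = 0 := by
  simpa [perm] using sum_eq_zero_iff_of_nonneg (s := univ) fun σ _ =>
    prod_nonneg fun k _ => hA k (σ k)

lemma piMap_eq_zero_iff [Nonempty ι] (hA : ∀ i j, 0 ≤ A i j) :
    PiMap A = 0 ↔ ∀ σ : Equiv.Perm ι, ∏ k, A k (σ k) = 0 := by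
  refine ⟨fun h σ => ?_, fun h => ?_⟩
  · by_contra hσ
    have hpos := (prod_nonneg fun k _ => hA k (σ k)).lt_of_ne' hσ
    obtain ⟨i⟩ := ‹Nonempty ι›
    have := (prod_diag_pos_iff hA σ).1 hpos i
    rw [← piMap_apply_of_onPosDiag ⟨σ, rfl, hpos⟩, h] at this
    exact this.false
  · ext i j
    exact piMap_apply_of_not_onPosDiag fun ⟨σ, _, hσ⟩ => hσ.ne' (h σ)

lemma perm_piMap (hA : ∀ i j, 0 ≤ A i j) : perm (PiMap A) = perm A := by
  refine sum_congr rfl fun σ _ => ?_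
  rcases (prod_nonneg fun k _ => hA k (σ k)).lt_or_eq' with hσ | hσ
  · exact prod_congr rfl fun k _ => piMap_apply_of_onPosDiag ⟨σ, rfl, hσ⟩
  · obtain ⟨k, -, hk⟩ := prod_eq_zero_iff.1 hσ
    rw [hσ, prod_eq_zero (mem_univ k)]
    exact le_antisymm (hk ▸ piMap_le hA k (σ k)) (piMap_nonneg hA k (σ k))

end PositiveDiagonals

section DiagonalDigraph

variable {ι : Type*} [Fintype ι] {A : Matrix ι ι ℝ} {σ₀ : Equiv.Perm ι}

def diagAdj (A : Matrix ι ι ℝ) (σ₀ : Equiv.Perm ι) (u v : ι) : Prop :=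
  0 < A u (σ₀ v)

lemma ancestorCount_diagAdj_eq (hA : ∀ i j, 0 ≤ A i j) {i j : ι} (h : OnPosDiag A i j) :
    ancestorCount (diagAdj A σ₀) i = ancestorCount (diagAdj A σ₀) (σ₀.symm j) := by
  obtain ⟨σ, hσi, hσ⟩ := h
  have hτ : ∀ k, diagAdj A σ₀ k ((σ.trans σ₀.symm) k) := by
    simpa [diagAdj] using (prod_diag_pos_iff hA σ).1 hσ
  simpa [hσi] using (ancestorCount_perm_apply hτ i).symm

lemma ancestorCount_diagAdj_lt (hA : ∀ i j, 0 ≤ A i j) (hσ₀ : 0 < ∏ k, A k (σ₀ k)) {i j : ι}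
    (hij : 0 < A i j) (h : ¬OnPosDiag A i j) :
    ancestorCount (diagAdj A σ₀) i < ancestorCount (diagAdj A σ₀) (σ₀.symm j) := by
  have hedge : diagAdj A σ₀ i (σ₀.symm j) := by simpa [diagAdj] using hij
  refine ancestorCount_lt hedge fun hrel => h ?_
  obtain ⟨τ, hτi, hτ⟩ :=
    Equiv.Perm.exists_apply_eq_of_reflTransGen ((prod_diag_pos_iff hA σ₀).1 hσ₀) hedge hrel
  exact ⟨τ.trans σ₀, by simp [hτi], prod_pos fun k _ => hτ k⟩

lemma pow_div_pow_le_inv {t : ℝ} (ht : 1 ≤ t) {a b : ℕ} (hab : a < b) : t ^ a / t ^ b ≤ t⁻¹ := by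
  have ht0 : 0 < t := one_pos.trans_le ht
  calc t ^ a / t ^ b ≤ t ^ a / t ^ (a + 1) :=
        div_le_div_of_nonneg_left (by positivity) (by positivity) (pow_le_pow_right₀ ht hab)
    _ = t⁻¹ := by rw [pow_succ]; field_simp

lemma mul_pow_ancestorCount_div_le [DecidableEq ι] (hA : ∀ i j, 0 ≤ A i j)
    (hσ₀ : 0 < ∏ k, A k (σ₀ k)) {t : ℝ} (ht : 1 ≤ t) (i j : ι) :
    A i j * (t ^ ancestorCount (diagAdj A σ₀) i / t ^ ancestorCount (diagAdj A σ₀) (σ₀.symm j))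
      ≤ PiMap A i j + A i j / t := by
  have ht0 : 0 < t := one_pos.trans_le ht
  by_cases h : OnPosDiag A i j
  · rw [ancestorCount_diagAdj_eq hA h, div_self (by positivity), mul_one,
      piMap_apply_of_onPosDiag h]
    exact le_add_of_nonneg_right (div_nonneg (hA i j) ht0.le)
  rw [piMap_apply_of_not_onPosDiag h, zero_add, div_eq_mul_inv]
  rcases (hA i j).lt_or_eq with hij | hij
  · exact mul_le_mul_of_nonneg_left
      (pow_div_pow_le_inv ht (ancestorCount_diagAdj_lt hA hσ₀ hij h)) (hA i j)
  · simp [← hij]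

end DiagonalDigraph

lemma le_of_forall_le_add_div {a b C : ℝ} (h : ∀ t ≥ (1 : ℝ), a ≤ b + C / t) : a ≤ b := by
  have hlim : Tendsto (fun t : ℝ => b + C / t) atTop (𝓝 (b + 0)) :=
    tendsto_const_nhds.add (tendsto_const_nhds.div_atTop tendsto_id)
  rw [add_zero] at hlim
  exact ge_of_tendsto hlim ((eventually_ge_atTop 1).mono h)

section ScalingMean

variable {ι κ : Type*} [Fintype ι] [Fintype κ]

noncomputable def smRatio (A : Matrix ι κ ℝ) (x : ι → ℝ) (y : κ → ℝ) : ℝ :=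
  (∑ i, ∑ j, x i * A i j * y j) / (gmVec x * gmVec y)

lemma gmVec_pos {x : ι → ℝ} (hx : ∀ i, 0 < x i) : 0 < gmVec x :=
  Real.rpow_pos_of_pos (prod_pos fun i _ => hx i) _

lemma gmVec_mul_gmVec {x y : ι → ℝ} (hx : ∀ i, 0 < x i) (hy : ∀ i, 0 < y i) :
    gmVec x * gmVec y = ((∏ i, x i) * ∏ i, y i) ^ (Fintype.card ι : ℝ)⁻¹ :=
  (Real.mul_rpow (prod_nonneg fun i _ => (hx i).le) (prod_nonneg fun i _ => (hy i).le)).symm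

lemma smRatio_nonneg {A : Matrix ι κ ℝ} (hA : ∀ i j, 0 ≤ A i j) {x : ι → ℝ} {y : κ → ℝ}
    (hx : ∀ i, 0 < x i) (hy : ∀ j, 0 < y j) : 0 ≤ smRatio A x y :=
  div_nonneg (sum_nonneg fun i _ => sum_nonneg fun j _ => by
    have := hA i j; have := hx i; have := hy j; positivity)
    (mul_pos (gmVec_pos hx) (gmVec_pos hy)).le

lemma sInf_smSet_le {A : Matrix ι κ ℝ} (hA : ∀ i j, 0 ≤ A i j) {x : ι → ℝ} {y : κ → ℝ}
    (hx : ∀ i, 0 < x i) (hy : ∀ j, 0 < y j) : sInf (smSet A) ≤ smRatio A x y :=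
  csInf_le ⟨0, fun _ ⟨_, _, hx', hy', hr⟩ => hr ▸ smRatio_nonneg hA hx' hy'⟩ ⟨x, y, hx, hy, rfl⟩

lemma le_sInf_smSet {A : Matrix ι κ ℝ} {a : ℝ}
    (h : ∀ x y, (∀ i, 0 < x i) → (∀ j, 0 < y j) → a ≤ smRatio A x y) : a ≤ sInf (smSet A) :=
  le_csInf ⟨_, 1, 1, fun _ => one_pos, fun _ => one_pos, rfl⟩
    fun _ ⟨x, y, hx, hy, hr⟩ => hr ▸ h x y hx hy

lemma sInf_smSet_mono {A B : Matrix ι κ ℝ} (hB : ∀ i j, 0 ≤ B i j) (hBA : ∀ i j, B i j ≤ A i j) :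
    sInf (smSet B) ≤ sInf (smSet A) :=
  le_sInf_smSet fun _ _ hx hy => (sInf_smSet_le hB hx hy).trans <|
    div_le_div_of_nonneg_right (sum_le_sum fun i _ => sum_le_sum fun j _ =>
      mul_le_mul_of_nonneg_right (mul_le_mul_of_nonneg_left (hBA i j) (hx i).le) (hy j).le)
      (mul_pos (gmVec_pos hx) (gmVec_pos hy)).le

end ScalingMean

section ScalingMeanOfPiMap

variable {ι : Type*} [Fintype ι] [DecidableEq ι] {A : Matrix ι ι ℝ}

lemma sInf_smSet_le_smRatio_piMap (hA : ∀ i j, 0 ≤ A i j) {σ₀ : Equiv.Perm ι}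
    (hσ₀ : 0 < ∏ k, A k (σ₀ k)) {x y : ι → ℝ} (hx : ∀ i, 0 < x i) (hy : ∀ j, 0 < y j) :
    sInf (smSet A) ≤ smRatio (PiMap A) x y := by
  set f := ancestorCount (diagAdj A σ₀)
  refine le_of_forall_le_add_div (C := smRatio A x y) fun t ht => ?_
  have ht0 : 0 < t := one_pos.trans_le ht
  set x' : ι → ℝ := fun i => x i * t ^ f i
  set y' : ι → ℝ := fun j => y j / t ^ f (σ₀.symm j)
  have hx' : ∀ i, 0 < x' i := fun i => mul_pos (hx i) (by positivity)
  have hy' : ∀ j, 0 < y' j := fun j => div_pos (hy j) (by positivity)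
  have hgm : gmVec x' * gmVec y' = gmVec x * gmVec y := by
    rw [gmVec_mul_gmVec hx' hy', gmVec_mul_gmVec hx hy]
    simp only [x', y', prod_mul_distrib, prod_div_distrib, prod_pow_eq_pow_sum,
      Equiv.sum_comp σ₀.symm f]
    field_simp
  have hentry : ∀ i j, x' i * A i j * y' j ≤ x i * PiMap A i j * y j + x i * A i j * y j / t :=
    fun i j => calc
      x' i * A i j * y' j = x i * (A i j * (t ^ f i / t ^ f (σ₀.symm j))) * y j := by
        simp only [x', y']; ring
      _ ≤ x i * (PiMap A i j + A i j / t) * y j := by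
        gcongr
        · exact (hy j).le
        · exact (hx i).le
        · exact mul_pow_ancestorCount_div_le hA hσ₀ ht i j
      _ = x i * PiMap A i j * y j + x i * A i j * y j / t := by ring
  calc sInf (smSet A) ≤ smRatio A x' y' := sInf_smSet_le hA hx' hy'
    _ ≤ smRatio (PiMap A) x y + smRatio A x y / t := by
      rw [smRatio, smRatio, smRatio, hgm, div_right_comm _ _ t, ← add_div]
      refine div_le_div_of_nonneg_right ?_ (mul_pos (gmVec_pos hx) (gmVec_pos hy)).le
      calc ∑ i, ∑ j, x' i * A i j * y' j
          ≤ ∑ i, ∑ j, (x i * PiMap A i j * y j + x i * A i j * y j / t) :=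
            sum_le_sum fun i _ => sum_le_sum fun j _ => hentry i j
        _ = ∑ i, ∑ j, x i * PiMap A i j * y j + (∑ i, ∑ j, x i * A i j * y j) / t := by
            simp only [sum_add_distrib, sum_div]

lemma sInf_smSet_nonpos (hA : ∀ i j, 0 ≤ A i j) (h : ∀ σ : Equiv.Perm ι, ∏ k, A k (σ k) = 0) :
    sInf (smSet A) ≤ 0 := by
  classical
  obtain ⟨s, hs⟩ : ∃ s : Finset ι, #{j | ∃ i ∈ s, 0 < A i j} < #s := by
    by_contra! hall
    obtain ⟨σ, hσ⟩ := Equiv.Perm.exists_forall_rel_of_hall hall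
    exact (prod_pos fun k _ => hσ k).ne' (h σ)
  set N : Finset ι := {j | ∃ i ∈ s, 0 < A i j}
  have hcard : Fintype.card ι ≠ 0 := by
    obtain ⟨i, -⟩ := card_pos.1 ((Nat.zero_le _).trans_lt hs)
    have : Nonempty ι := ⟨i⟩
    exact Fintype.card_ne_zero
  refine le_of_forall_le_add_div (C := ∑ i, ∑ j, A i j) fun t ht => ?_
  have ht0 : 0 < t := one_pos.trans_le ht
  set T := t ^ Fintype.card ι
  have hT : 1 ≤ T := one_le_pow₀ ht
  set x : ι → ℝ := fun i => if i ∈ s then T else 1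
  set y : ι → ℝ := fun j => if j ∈ N then T⁻¹ else 1
  have hx : ∀ i, 0 < x i := fun i => by positivity
  have hy : ∀ j, 0 < y j := fun j => by positivity
  have hsum : ∑ i, ∑ j, x i * A i j * y j ≤ ∑ i, ∑ j, A i j := by
    refine sum_le_sum fun i _ => sum_le_sum fun j _ => ?_
    rcases (hA i j).lt_or_eq with hij | hij
    · by_cases hi : i ∈ s
      · have hj : j ∈ N := by simpa [N] using ⟨i, hi, hij⟩
        simp only [x, y, if_pos hi, if_pos hj]
        rw [mul_right_comm, mul_inv_cancel₀ (by positivity), one_mul]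
      · have hyj : y j ≤ 1 := by unfold y; split_ifs <;> simp [inv_le_one_of_one_le₀ hT]
        simpa [x, hi] using mul_le_of_le_one_right (hA i j) hyj
    · simp [← hij]
  have hgm : t ≤ gmVec x * gmVec y := by
    have hprod : T ≤ (∏ i, x i) * ∏ j, y j := by
      simp only [x, y, Fintype.prod_ite_mem, prod_const, inv_pow]
      rw [← div_eq_mul_inv, le_div_iff₀ (by positivity), ← pow_succ']
      exact pow_le_pow_right₀ hT hs
    rw [gmVec_mul_gmVec hx hy, ← Real.pow_rpow_inv_natCast ht0.le hcard]
    gcongr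
  calc sInf (smSet A) ≤ smRatio A x y := sInf_smSet_le hA hx hy
    _ ≤ (∑ i, ∑ j, A i j) / t :=
      div_le_div₀ (sum_nonneg fun i _ => sum_nonneg fun j _ => hA i j) hsum ht0 hgm
    _ = 0 + (∑ i, ∑ j, A i j) / t := (zero_add _).symm

lemma sInf_smSet_piMap (hA : ∀ i j, 0 ≤ A i j) : sInf (smSet (PiMap A)) = sInf (smSet A) := by
  refine le_antisymm (sInf_smSet_mono (piMap_nonneg hA) (piMap_le hA)) ?_
  by_cases hdiag : ∃ σ : Equiv.Perm ι, 0 < ∏ k, A k (σ k)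
  · obtain ⟨σ₀, hσ₀⟩ := hdiag
    exact le_sInf_smSet fun x y hx hy => sInf_smSet_le_smRatio_piMap hA hσ₀ hx hy
  · have hzero (σ : Equiv.Perm ι) : ∏ k, A k (σ k) = 0 :=
      (not_lt.1 fun h => hdiag ⟨σ, h⟩).antisymm (prod_nonneg fun k _ => hA k (σ k))
    exact (sInf_smSet_nonpos hA hzero).trans
      (le_sInf_smSet fun x y hx hy => smRatio_nonneg (piMap_nonneg hA) hx hy)

end ScalingMeanOfPiMap

/-- Properties of the projection `Π`: (i) `Π(A) = 0` iff `per A = 0`;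
(ii) `pm(Π(A)) = pm(A)`; (iii) `sm(Π(A)) = sm(A)`. -/
theorem stmt_11 {n : ℕ} (hn : 0 < n) (A : Matrix (Fin n) (Fin n) ℝ)
    (hA : ∀ i j, 0 ≤ A i j) :
    (PiMap A = 0 ↔ perm A = 0) ∧ pm (PiMap A) = pm A ∧ sm (PiMap A) = sm A := by
  have : Nonempty (Fin n) := ⟨⟨0, hn⟩⟩
  refine ⟨(piMap_eq_zero_iff hA).trans (perm_eq_zero_iff hA).symm, ?_, ?_⟩
  · rw [pm, pm, perm_piMap hA]
  · rw [sm, sm, sInf_smSet_piMap hA]
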